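/- (Lower bound with redundancies for overlapping information sets) Let C ⊆ F_q^n be a linear code of dimension k and let I_1, ..., I_m ⊆ {1,...,n} be information sets for C (not necessarily disjoint). Define the redundancy of I_j as R_j = |I_j ∩ (I_1 ∪ ··· ∪ I_{j−1})| (with R_1 = 0). Let D ⊆ C be a subcode of dimension r and let w ≥ r be an integer such that, for every j = 1, ..., m, the projection E_j = π_{I_j}(D) satisfies |supp(E_j)| ≥ w + 1. Then |supp(D)| ≥ Σ_{j=1}^m max{0, (w+1) − R_j}. -/

import Mathlib

/-! The projection of `D` onto `I_j` has support `I_j ∩ supp D`, so each `I_j` meets `supp D` in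
at least `w + 1` coordinates. At most `R_j` of them lie in an earlier `I_t`; the remaining ones
are new, and the new parts of the successive `I_j` are pairwise disjoint subsets of `supp D`. -/

open Classical

/-- The support of a linear subspace `D` of `ι → F`:
the set of coordinates at which some element of `D` is nonzero. -/
def Submodule.suppSet {F ι : Type*} [Field F] (D : Submodule F (ι → F)) : Set ι :=
  {i | ∃ c ∈ D, c i ≠ 0}

/-- The `r`-th generalized Hamming weight of a linear code `C ⊆ F^ι`:
the minimum support size of an `r`-dimensional subcode of `C`. -/
noncomputable def ghw {F ι : Type*} [Field F] (C : Submodule F (ι → F)) (r : ℕ) : ℕ :=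
  sInf {w | ∃ D : Submodule F (ι → F),
    D ≤ C ∧ Module.finrank F D = r ∧ D.suppSet.ncard = w}

/-- The `r`-th relative generalized Hamming weight of the nested pair `C₂ ⊆ C₁`:
the minimum support size of an `r`-dimensional subcode `D` of `C₁` with `D ∩ C₂ = 0`. -/
noncomputable def rghw {F ι : Type*} [Field F] (C₁ C₂ : Submodule F (ι → F)) (r : ℕ) : ℕ :=
  sInf {w | ∃ D : Submodule F (ι → F),
    D ≤ C₁ ∧ D ⊓ C₂ = ⊥ ∧ Module.finrank F D = r ∧ D.suppSet.ncard = w}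

/-- The dual code of `C ⊆ F^n` with respect to the standard Euclidean inner product. -/
def dualCode {F : Type*} [Field F] {n : ℕ} (C : Submodule F (Fin n → F)) :
    Submodule F (Fin n → F) where
  carrier := {x | ∀ c ∈ C, ∑ i, x i * c i = 0}
  add_mem' := by
    intro a b ha hb c hc
    simp only [Set.mem_setOf_eq] at *
    simp [Pi.add_apply, add_mul, Finset.sum_add_distrib, ha c hc, hb c hc]
  zero_mem' := by simp
  smul_mem' := by
    intro t a ha c hc
    simp only [Set.mem_setOf_eq] at *
    simp [Pi.smul_apply, smul_eq_mul, mul_assoc, ← Finset.mul_sum, ha c hc]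

open Finset

theorem Submodule.suppSet_map_funLeft {F ι κ : Type*} [Field F] (f : κ → ι)
    (D : Submodule F (ι → F)) :
    (D.map (LinearMap.funLeft F F f)).suppSet = f ⁻¹' D.suppSet := by
  ext i
  simp [Submodule.suppSet, LinearMap.funLeft_apply]

theorem Finset.ncard_preimage_coe {α : Type*} [DecidableEq α] (t s : Finset α) :
    (((↑) : t → α) ⁻¹' s).ncard = #(t ∩ s) := by
  rw [← Set.ncard_image_of_injective _ Subtype.coe_injective,
    Set.image_preimage_eq_inter_range, Subtype.range_coe_subtype, ← Set.ncard_coe_finset,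
    coe_inter, Set.inter_comm]
  rfl

theorem Finset.sum_card_inter_sub_card_inter_biUnion_Iio_le_card {ι α : Type*} [LinearOrder ι]
    [Fintype ι] [LocallyFiniteOrderBot ι] [DecidableEq α] (I : ι → Finset α) (s : Finset α) :
    ∑ j, (#(I j ∩ s) - #(I j ∩ (Iio j).biUnion I)) ≤ #s := by
  set J : ι → Finset α := fun j => I j ∩ s
  have hnew : ∀ j, #(I j ∩ s) - #(I j ∩ (Iio j).biUnion I) ≤ #(disjointed J j) := by
    intro j
    rw [disjointed_apply, card_sdiff]
    refine Nat.sub_le_sub_left (card_le_card fun x hx => ?_) _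
    obtain ⟨hxsup, hxj⟩ := mem_inter.1 hx
    obtain ⟨t, ht, hxt⟩ := mem_sup.1 hxsup
    exact mem_inter.2 ⟨(mem_inter.1 hxj).1, mem_biUnion.2 ⟨t, ht, (mem_inter.1 hxt).1⟩⟩
  calc ∑ j, (#(I j ∩ s) - #(I j ∩ (Iio j).biUnion I))
      ≤ ∑ j, #(disjointed J j) := sum_le_sum fun j _ => hnew j
    _ = #(univ.biUnion (disjointed J)) :=
      (card_biUnion fun i _ j _ hij => disjoint_disjointed J hij).symm
    _ ≤ #s := card_le_card <| biUnion_subset.2 fun j _ =>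
      (disjointed_le J j).trans inter_subset_right

theorem statement_15 {F : Type*} [Field F] {n m w : ℕ}
    (I : Fin m → Finset (Fin n))
    (R : Fin m → ℕ)
    (hR : ∀ j : Fin m,
      R j = ((I j) ∩ ((Finset.univ.filter fun t : Fin m => t < j).biUnion I)).card)
    (D : Submodule F (Fin n → F))
    (hsupp : ∀ j : Fin m, w + 1 ≤
      (Submodule.map (LinearMap.funLeft F F ((↑) : ↥(I j) → Fin n)) D).suppSet.ncard) :
    ∑ j : Fin m, ((w + 1) - R j) ≤ D.suppSet.ncard := by
  set s := (Set.toFinite D.suppSet).toFinset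
  have hs : D.suppSet = s := (Set.toFinite _).coe_toFinset.symm
  have hcover (j : Fin m) : w + 1 ≤ #(I j ∩ s) := by
    simpa only [Submodule.suppSet_map_funLeft, hs, Finset.ncard_preimage_coe] using hsupp j
  calc ∑ j, ((w + 1) - R j)
      ≤ ∑ j, (#(I j ∩ s) - #(I j ∩ (Iio j).biUnion I)) := sum_le_sum fun j _ => by
        rw [hR j, filter_gt_eq_Iio]
        exact Nat.sub_le_sub_right (hcover j) _
    _ ≤ #s := sum_card_inter_sub_card_inter_biUnion_Iio_le_card I s
    _ = D.suppSet.ncard := by rw [hs, Set.ncard_coe_finset]
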